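/- Let P be a Markov kernel on a measurable space E, let K ⊆ E be measurable, and let Q_K be the sub-kernel Q_K(x,A) := P(x, A ∩ K). Write S_n(x) := (Q_K^n 𝟙)(x), the probability that the chain started at x lies in K at each of the times 1, …, n (S₀ ≡ 1). Let k > 0 and α ∈ (0,1). Suppose g : E → ℝ is bounded measurable with g ≥ 0 everywhere and g(x) ≥ k for all x ∈ K, suppose for every n ≥ 1 there exists x ∈ K with S_{n−1}(x) ≥ α^n, and suppose (w, λ) is a bounded MPE solution for g. Then λ ≥ k + log α. -/

import Mathlib

/-!
Exponentiating the MPE gives `e^{w(x)} = e^{g(x) - λ} ∫ e^{w} dP(x)`, and on `K`, where `g ≥ k`,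
this is at least `e^{k - λ} ∫_K e^{w} dP(x)`. Iterating this inequality along the recursion
defining `S_n`, starting from `e^{w} ≥ e^{-C}` where `|w| ≤ C`, yields
`e^{w(x)} ≥ e^{-C} e^{n(k - λ)} S_n(x)` on `K`. At the points where `S_n ≥ α^{n+1}`, the bound
`e^{w} ≤ e^{C}` then keeps `(e^{k - λ} α)^n` bounded in `n`, so `e^{k - λ} α ≤ 1`.
-/

open MeasureTheory ProbabilityTheory

/-- `staySeq P K n x = (Q_K^n 𝟙)(x)`, the probability that the chain with kernel `P` started
at `x` lies in `K` at each of the times `1, …, n`, where `Q_K(x,A) = P(x, A ∩ K)` is the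
sub-kernel associated with `K`. -/
noncomputable def staySeq {E : Type*} [MeasurableSpace E] (P : Kernel E E) (K : Set E) :
    ℕ → E → ℝ
  | 0 => fun _ => 1
  | n + 1 => fun x => ∫ y in K, staySeq P K n y ∂(P x)

lemma le_one_of_forall_mul_pow_le {q a C : ℝ} (ha : 0 < a) (h : ∀ n : ℕ, a * q ^ n ≤ C) :
    q ≤ 1 := by
  by_contra! hq
  obtain ⟨n, hn⟩ := pow_unbounded_of_one_lt (C / a) hq
  have := h n
  rw [div_lt_iff₀ ha] at hn
  linarith

lemma integrable_exp_of_abs_le {E : Type*} [MeasurableSpace E] {μ : Measure E}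
    [IsFiniteMeasure μ] {w : E → ℝ} (hw : Measurable w) {C : ℝ} (hC : ∀ x, |w x| ≤ C) :
    Integrable (fun x => Real.exp (w x)) μ :=
  .of_bound hw.exp.aestronglyMeasurable (Real.exp C) <| .of_forall fun x => by
    rw [Real.norm_eq_abs, Real.abs_exp]
    exact Real.exp_le_exp.2 (abs_le.1 (hC x)).2

namespace staySeq

variable {E : Type*} [MeasurableSpace E] (P : Kernel E E) (K : Set E)

lemma nonneg (n : ℕ) (x : E) : 0 ≤ staySeq P K n x := by
  induction n generalizing x with
  | zero => exact zero_le_one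
  | succ n ih => exact integral_nonneg ih

lemma mul_pow_mul_le {u : E → ℝ} {m r : ℝ} (hK : MeasurableSet K) (hm : 0 ≤ m) (hr : 0 ≤ r)
    (hmu : ∀ x, m ≤ u x) (hu : ∀ x, Integrable u (P x))
    (hstep : ∀ x ∈ K, r * ∫ y, u y ∂(P x) ≤ u x) (n : ℕ) :
    ∀ x ∈ K, m * r ^ n * staySeq P K n x ≤ u x := by
  induction n with
  | zero => simpa [staySeq] using fun x _ => hmu x
  | succ n ih =>
    intro x hx
    have hu_nonneg : ∀ y, 0 ≤ u y := fun y => hm.trans (hmu y)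
    have hK_avg : m * r ^ n * staySeq P K (n + 1) x ≤ ∫ y in K, u y ∂(P x) := by
      rw [staySeq, ← integral_const_mul]
      exact integral_mono_of_nonneg
        (.of_forall fun y => mul_nonneg (by positivity) (nonneg P K n y))
        (hu x).restrict (ae_restrict_of_forall_mem hK ih)
    calc m * r ^ (n + 1) * staySeq P K (n + 1) x
        = r * (m * r ^ n * staySeq P K (n + 1) x) := by ring
      _ ≤ r * ∫ y, u y ∂(P x) := by
        gcongr
        exact hK_avg.trans (setIntegral_le_integral (hu x) (.of_forall hu_nonneg))
      _ ≤ u x := hstep x hx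

end staySeq

theorem mpe_value_lower_bound_of_geometric_stay_general {E : Type*} [MeasurableSpace E]
    (P : Kernel E E) [IsMarkovKernel P]
    (K : Set E) (hK : MeasurableSet K)
    (k : ℝ) (α : ℝ) (hα : α ∈ Set.Ioo (0 : ℝ) 1)
    (g : E → ℝ) (hgK : ∀ x ∈ K, k ≤ g x)
    (hstay : ∀ n : ℕ, 1 ≤ n → ∃ x ∈ K, α ^ n ≤ staySeq P K (n - 1) x)
    (w : E → ℝ) (hw_meas : Measurable w) (Cw : ℝ) (hw_bdd : ∀ x, |w x| ≤ Cw)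
    (lam : ℝ)
    (hMPE : ∀ x, w x = g x - lam + Real.log (∫ y, Real.exp (w y) ∂(P x))) :
    k + Real.log α ≤ lam := by
  have hint (x : E) := integrable_exp_of_abs_le (μ := P x) hw_meas hw_bdd
  have hstep : ∀ x ∈ K, Real.exp (k - lam) * ∫ y, Real.exp (w y) ∂(P x) ≤ Real.exp (w x) := by
    intro x hx
    rw [hMPE x, Real.exp_add, Real.exp_log (integral_exp_pos (hint x))]
    gcongr
    exact hgK x hx
  have hbound (n : ℕ) : Real.exp (-Cw) * α * (Real.exp (k - lam) * α) ^ n ≤ Real.exp Cw := by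
    obtain ⟨x, hxK, hxS⟩ := hstay (n + 1) n.succ_pos
    calc Real.exp (-Cw) * α * (Real.exp (k - lam) * α) ^ n
        = Real.exp (-Cw) * Real.exp (k - lam) ^ n * α ^ (n + 1) := by ring
      _ ≤ Real.exp (-Cw) * Real.exp (k - lam) ^ n * staySeq P K n x := by gcongr; exact hxS
      _ ≤ Real.exp (w x) :=
        staySeq.mul_pow_mul_le P K hK (Real.exp_nonneg _) (Real.exp_nonneg _)
          (fun y => Real.exp_le_exp.2 (neg_le_of_abs_le (hw_bdd y))) hint hstep n x hxK
      _ ≤ Real.exp Cw := Real.exp_le_exp.2 (le_of_abs_le (hw_bdd x))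
  have hle := le_one_of_forall_mul_pow_le (by have := hα.1; positivity) hbound
  rw [← Real.exp_log hα.1, ← Real.exp_add, Real.exp_le_one_iff] at hle
  linarith

/-- If `g ≥ 0` everywhere, `g ≥ k` on `K`, the chain can stay in `K` with geometric
probability at least `αⁿ` (i.e. for every `n ≥ 1` some `x ∈ K` has `S_{n-1}(x) ≥ αⁿ`), and
`(w, lam)` is a bounded MPE solution for `g`, then `lam ≥ k + log α`. -/
theorem mpe_value_lower_bound_of_geometric_stay {E : Type*} [MeasurableSpace E]
    (P : Kernel E E) [IsMarkovKernel P]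
    (K : Set E) (hK : MeasurableSet K)
    (k : ℝ) (hk : 0 < k) (α : ℝ) (hα : α ∈ Set.Ioo (0 : ℝ) 1)
    (g : E → ℝ) (hg_meas : Measurable g) (Cg : ℝ) (hg_bdd : ∀ x, |g x| ≤ Cg)
    (hg_nonneg : ∀ x, 0 ≤ g x) (hgK : ∀ x ∈ K, k ≤ g x)
    (hstay : ∀ n : ℕ, 1 ≤ n → ∃ x ∈ K, α ^ n ≤ staySeq P K (n - 1) x)
    (w : E → ℝ) (hw_meas : Measurable w) (Cw : ℝ) (hw_bdd : ∀ x, |w x| ≤ Cw)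
    (lam : ℝ)
    (hMPE : ∀ x, w x = g x - lam + Real.log (∫ y, Real.exp (w y) ∂(P x))) :
    k + Real.log α ≤ lam :=
  mpe_value_lower_bound_of_geometric_stay_general P K hK k α hα g hgK hstay w hw_meas Cw hw_bdd lam
    hMPE
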